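/- If F = (M, {A^u}) is an FDFA such that for every accepted decomposition (u, v), the decomposition (u, v^k) is accepted for all k ≥ 1 (power-closure), then the under-approximation Büchi automaton B̲ of F satisfies UP(L(B̲)) = UP(F). In particular this holds when F is a canonical (periodic, syntactic, or recurrent) FDFA of an ω-regular language. -/
import Mathlib


/-- Prepend a finite word to an infinite word. -/
def prependW {α : Type} (u : List α) (w : ℕ → α) : ℕ → α :=
  fun i => if h : i < u.length then u.get ⟨i, h⟩ else w (i - u.length)

/-- The periodic infinite word `v^ω` (arbitrary when `v = []`). -/
def periodW {α : Type} [Inhabited α] (v : List α) : ℕ → α :=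
  fun i => v.getD (i % v.length) default

/-- The ultimately periodic word `u · v^ω`. -/
def upw {α : Type} [Inhabited α] (u v : List α) : ℕ → α :=
  prependW u (periodW v)

/-- The ultimately periodic words of an ω-language. -/
def UP {α : Type} [Inhabited α] (L : Set (ℕ → α)) : Set (ℕ → α) :=
  { w | ∃ u v : List α, v ≠ [] ∧ w = upw u v ∧ w ∈ L }

/-- `v^k` : `k`-fold repetition of the finite word `v`. -/
def rep {α : Type} (v : List α) (k : ℕ) : List α :=
  (List.replicate k v).flatten
/-- A family of DFAs: a leading DFA `M` (accepting states irrelevant) and a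
progress DFA `A s` for each leading state `s`. -/
structure FDFA (α : Type) : Type 1 where
  S : Type
  finS : Fintype S
  M : DFA α S
  Pσ : S → Type
  finP : ∀ s, Fintype (Pσ s)
  A : ∀ s, DFA α (Pσ s)

/-- The decomposition `(u, v)` is accepted by the FDFA `F`:
`M(uv) = M(u)` and `v ∈ L(A^{M(u)})`. -/
def FDFA.acceptsDecomp {α : Type} (F : FDFA α) (u v : List α) : Prop :=
  F.M.eval (u ++ v) = F.M.eval u ∧ v ∈ (F.A (F.M.eval u)).accepts

/-- `UP(F)`: ultimately periodic words with an accepted decomposition. -/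
def FDFA.UPF {α : Type} [Inhabited α] (F : FDFA α) : Set (ℕ → α) :=
  { w | ∃ u v : List α, v ≠ [] ∧ w = upw u v ∧ F.acceptsDecomp u v }

/-- `L(M^u_u × (A^u)^{s_u}_q × (A^u)^q_q)`: loop words of the
under-approximation component for leading state `u` and progress state `q`. -/
def underLoop {α : Type} (F : FDFA α) (u : F.S) (q : F.Pσ u) : Set (List α) :=
  { y | F.M.evalFrom u y = u ∧ (F.A u).eval y = q ∧ (F.A u).evalFrom q y = q }

/-- `L(M^u_u × (A^u)^{s_u}_q)`: loop words of the over-approximation component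
for leading state `u` and progress state `q`. -/
def overLoop {α : Type} (F : FDFA α) (u : F.S) (q : F.Pσ u) : Set (List α) :=
  { y | F.M.evalFrom u y = u ∧ (F.A u).eval y = q }

/-- The finite word `p` is a prefix of the infinite word `w`. -/
def prefW {α : Type} [Inhabited α] (p : List α) (w : ℕ → α) : Prop :=
  ∀ i, i < p.length → w i = p.getD i default

/-- `w` is the infinite concatenation `x · ys 0 · ys 1 · ⋯`. -/
def isConcatW {α : Type} [Inhabited α] (x : List α) (ys : ℕ → List α)
    (w : ℕ → α) : Prop :=
  ∀ n : ℕ, prefW (x ++ ((List.range n).map ys).flatten) w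

/-- The ω-language of the under-approximation Büchi automaton `B̲`:
`⋃_{u, q accepting} L(M^{q₀}_u) · (L(M^u_u × (A^u)^{s_u}_q × (A^u)^q_q))^ω`. -/
def underLang {α : Type} [Inhabited α] (F : FDFA α) : Set (ℕ → α) :=
  { w | ∃ (u : F.S) (q : F.Pσ u), q ∈ (F.A u).accept ∧
      ∃ (x : List α) (ys : ℕ → List α), F.M.eval x = u ∧
        (∀ i, ys i ≠ [] ∧ ys i ∈ underLoop F u q) ∧ isConcatW x ys w }

/-- The ω-language of the over-approximation Büchi automaton `B̄`:
`⋃_{u, q accepting} L(M^{q₀}_u) · (L(M^u_u × (A^u)^{s_u}_q))^ω`. -/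
def overLang {α : Type} [Inhabited α] (F : FDFA α) : Set (ℕ → α) :=
  { w | ∃ (u : F.S) (q : F.Pσ u), q ∈ (F.A u).accept ∧
      ∃ (x : List α) (ys : ℕ → List α), F.M.eval x = u ∧
        (∀ i, ys i ≠ [] ∧ ys i ∈ overLoop F u q) ∧ isConcatW x ys w }

/-- `UP(L(B̲))`. -/
def underUP {α : Type} [Inhabited α] (F : FDFA α) : Set (ℕ → α) :=
  UP (underLang F)

/-- `UP(L(B̄))`. -/
def overUP {α : Type} [Inhabited α] (F : FDFA α) : Set (ℕ → α) :=
  UP (overLang F)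


section Stmt15Aux

set_option linter.unusedSectionVars false

variable {α : Type} [Inhabited α]

theorem eval_append {σ : Type} (M : DFA α σ) (x y : List α) :
    M.eval (x ++ y) = M.evalFrom (M.eval x) y :=
  M.evalFrom_of_append M.start x y

theorem rep_succ (v : List α) (k : ℕ) : rep v (k+1) = v ++ rep v k := by
  simp [rep, List.replicate_succ]

theorem rep_add (v : List α) (a b : ℕ) : rep v (a+b) = rep v a ++ rep v b := by
  simp only [rep, List.replicate_add, List.flatten_append]

theorem length_rep (v : List α) (k : ℕ) : (rep v k).length = k * v.length := by
  induction k with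
  | zero => simp [rep]
  | succ k ih => rw [rep_succ, List.length_append, ih]; ring

theorem rep_rep (v : List α) (m n : ℕ) : rep (rep v m) n = rep v (n * m) := by
  induction n with
  | zero => simp [rep]
  | succ n ih => rw [rep_succ, ih, show (n+1)*m = m + n*m by ring, rep_add]

theorem getD_rep (v : List α) (k j : ℕ) (h : j < k * v.length) :
    (rep v k).getD j default = v.getD (j % v.length) default := by
  induction k generalizing j with
  | zero => omega
  | succ k ih =>
    rw [rep_succ]
    by_cases hj : j < v.length
    · rw [List.getD_append _ _ _ _ hj, Nat.mod_eq_of_lt hj]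
    · push_neg at hj
      rw [List.getD_append_right _ _ _ _ hj,
        ih _ (by rw [Nat.succ_mul] at h; omega), Nat.mod_eq_sub_mod hj]

theorem upw_lt (u v : List α) (i : ℕ) (h : i < u.length) :
    upw u v i = u.getD i default := by
  simp [upw, prependW, h, List.getD_eq_getElem _ _ h]

theorem upw_ge (u v : List α) (i : ℕ) (h : u.length ≤ i) :
    upw u v i = v.getD ((i - u.length) % v.length) default := by
  simp [upw, prependW, periodW, Nat.not_lt.2 h]

theorem upw_period (u v : List α) (i : ℕ) (h : u.length ≤ i) :
    upw u v (i + v.length) = upw u v i := by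
  rw [upw_ge _ _ _ (le_trans h (Nat.le_add_right _ _)), upw_ge _ _ _ h,
    show i + v.length - u.length = (i - u.length) + v.length by omega,
    Nat.add_mod_right]

theorem upw_period_mul (u v : List α) (i c : ℕ) (h : u.length ≤ i) :
    upw u v (i + c * v.length) = upw u v i := by
  induction c with
  | zero => simp
  | succ c ih =>
    rw [show i + (c+1) * v.length = (i + c * v.length) + v.length by ring,
      upw_period _ _ _ (by omega), ih]

theorem prefW_upw_rep (u v : List α) (k : ℕ) : prefW (u ++ rep v k) (upw u v) := by
  intro i hi
  rw [List.length_append, length_rep] at hi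
  by_cases h : i < u.length
  · rw [upw_lt _ _ _ h, List.getD_append _ _ _ _ h]
  · push_neg at h
    rw [upw_ge _ _ _ h, List.getD_append_right _ _ _ _ h,
      getD_rep _ _ _ (by omega)]

/-- `z n = x · ys 0 ⋯ ys (n-1)`. -/
def zW (x : List α) (ys : ℕ → List α) (n : ℕ) : List α :=
  x ++ ((List.range n).map ys).flatten

/-- `seg m n = ys m ⋯ ys (n-1)`. -/
def segW (ys : ℕ → List α) (m n : ℕ) : List α :=
  ((List.range' m (n - m)).map ys).flatten

theorem zW_succ (x : List α) (ys : ℕ → List α) (n : ℕ) :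
    zW x ys (n + 1) = zW x ys n ++ ys n := by
  simp [zW, List.range_succ]

theorem segW_succ (ys : ℕ → List α) (m n : ℕ) (h : m ≤ n) :
    segW ys m (n + 1) = segW ys m n ++ ys n := by
  have h1 : n + 1 - m = (n - m) + 1 := by omega
  rw [segW, h1, List.range'_concat]
  have h2 : m + 1 * (n - m) = n := by omega
  rw [h2]
  simp [segW]

theorem zW_split (x : List α) (ys : ℕ → List α) (m n : ℕ) (h : m ≤ n) :
    zW x ys n = zW x ys m ++ segW ys m n := by
  induction n, h using Nat.le_induction with
  | base => simp [segW]
  | succ n hmn ih =>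
    rw [zW_succ, ih, segW_succ ys m n hmn, List.append_assoc]

theorem le_length_zW (x : List α) (ys : ℕ → List α) (hne : ∀ i, ys i ≠ [])
    (n : ℕ) : n ≤ (zW x ys n).length := by
  induction n with
  | zero => omega
  | succ n ih =>
    rw [zW_succ, List.length_append]
    have := List.length_pos_iff.2 (hne n)
    omega

theorem segW_ne (ys : ℕ → List α) (hne : ∀ i, ys i ≠ []) (m n : ℕ)
    (h : m < n) : segW ys m n ≠ [] := by
  induction n, h using Nat.le_induction with
  | base =>
    rw [segW_succ ys m m le_rfl]
    simp [segW, hne m]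
  | succ n hmn ih =>
    rw [segW_succ ys m n (by omega)]
    simp [hne n]

theorem underLoop_append {F : FDFA α} {s : F.S} {q : F.Pσ s} {a b : List α}
    (ha : a ∈ underLoop F s q) (hb : b ∈ underLoop F s q) :
    a ++ b ∈ underLoop F s q := by
  obtain ⟨h1, h2, h3⟩ := ha
  obtain ⟨h4, h5, h6⟩ := hb
  refine ⟨?_, ?_, ?_⟩
  · rw [DFA.evalFrom_of_append, h1, h4]
  · rw [eval_append, h2, h6]
  · rw [DFA.evalFrom_of_append, h3, h6]

theorem segW_loop (F : FDFA α) (s : F.S) (q : F.Pσ s) (ys : ℕ → List α)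
    (hys : ∀ i, ys i ∈ underLoop F s q) (m n : ℕ) (h : m < n) :
    segW ys m n ∈ underLoop F s q := by
  induction n, h using Nat.le_induction with
  | base =>
    rw [segW_succ ys m m le_rfl]
    simpa [segW] using hys m
  | succ n hmn ih =>
    rw [segW_succ ys m n (by omega)]
    exact underLoop_append ih (hys n)

end Stmt15Aux

/-- If the FDFA `F` is power-closed (acceptance of `(u, v)` implies acceptance
of `(u, v^k)` for all `k ≥ 1`) — as is the case for the canonical periodic,
syntactic and recurrent FDFAs of an ω-regular language — then the
under-approximation Büchi automaton `B̲` satisfies `UP(L(B̲)) = UP(F)`. -/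
theorem stmt_15 {α : Type} [Inhabited α] (F : FDFA α)
    (hclosed : ∀ u v : List α, v ≠ [] → F.acceptsDecomp u v →
      ∀ k : ℕ, 1 ≤ k → F.acceptsDecomp u (rep v k)) :
    underUP F = F.UPF := by
  
  apply Set.Subset.antisymm
  · -- UP(L(B̲)) ⊆ UP(F)
    rintro w ⟨u, v, hv, hw, s, q, hq, x, ys, hx, hys, hcat⟩
    have hvlen : 0 < v.length := List.length_pos_iff.2 hv
    have hMz : ∀ n, F.M.eval (zW x ys n) = s := by
      intro n
      induction n with
      | zero => simpa [zW] using hx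
      | succ n ih =>
        rw [zW_succ, eval_append, ih]
        exact (hys n).2.1
    have hpref : ∀ k, ∀ i < (zW x ys k).length, w i = (zW x ys k).getD i default := by
      intro k i hi
      exact hcat k i hi
    -- pigeonhole on residues of lengths
    set N := u.length with hN
    have hfin : ∃ i j : ℕ, i ≠ j ∧
        (zW x ys (N + i)).length % v.length = (zW x ys (N + j)).length % v.length := by
      obtain ⟨i, j, hne, he⟩ := Finite.exists_ne_map_eq_of_infinite
        (fun i : ℕ => (⟨(zW x ys (N + i)).length % v.length, Nat.mod_lt _ hvlen⟩ : Fin v.length))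
      exact ⟨i, j, hne, by simpa using congrArg Fin.val he⟩
    obtain ⟨i, j, hne, he⟩ := hfin
    -- wlog i < j
    obtain ⟨m, n, hmn, hmN, hmod⟩ : ∃ m n : ℕ, m < n ∧ N ≤ m ∧
        (zW x ys m).length % v.length = (zW x ys n).length % v.length := by
      rcases Nat.lt_or_ge i j with h | h
      · exact ⟨N + i, N + j, by omega, by omega, he⟩
      · exact ⟨N + j, N + i, by omega, by omega, he.symm⟩
    set seg := segW ys m n with hseg
    have hsplit : zW x ys n = zW x ys m ++ seg := zW_split x ys m n hmn.le
    have hloop : seg ∈ underLoop F s q := segW_loop F s q ys (fun i => (hys i).2) m n hmn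
    have hlm : m ≤ (zW x ys m).length := le_length_zW x ys (fun i => (hys i).1) m
    have hln : (zW x ys m).length < (zW x ys n).length := by
      rw [hsplit, List.length_append]
      have := (hys m).1
      have h1 : 0 < seg.length := by
        have : seg ≠ [] := segW_ne ys (fun i => (hys i).1) m n hmn
        exact List.length_pos_iff.2 this
      omega
    have hseglen : seg.length = (zW x ys n).length - (zW x ys m).length := by
      rw [hsplit, List.length_append]; omega
    have hsegpos : 0 < seg.length := by omega
    have hdvd : seg.length % v.length = 0 := by
      have h0 : ((zW x ys m).length + 0) % v.length
          = ((zW x ys m).length + seg.length) % v.length := by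
        rw [Nat.add_zero, ← List.length_append, ← hsplit]
        exact hmod
      have h1 := (Nat.ModEq.add_left_cancel' (zW x ys m).length h0).symm
      simpa [Nat.ModEq] using h1
    obtain ⟨c, hc⟩ : ∃ c, seg.length = c * v.length :=
      ⟨seg.length / v.length, (Nat.div_mul_cancel (Nat.dvd_of_mod_eq_zero hdvd)).symm⟩
    refine ⟨zW x ys m, seg, List.length_pos_iff.1 hsegpos, ?_, ?_, ?_⟩
    · -- w = upw (z m) seg
      funext i
      by_cases hi : i < (zW x ys m).length
      · rw [upw_lt _ _ _ hi, hpref m i hi]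
      · push_neg at hi
        rw [upw_ge _ _ _ hi]
        set jj := (i - (zW x ys m).length) % seg.length with hjj
        have hjlt : jj < seg.length := Nat.mod_lt _ hsegpos
        have hwj : w ((zW x ys m).length + jj) = seg.getD jj default := by
          rw [hpref n _ (by omega), hsplit,
            List.getD_append_right _ _ _ _ (Nat.le_add_right _ _)]
          congr 1
          omega
        have hky : i = ((zW x ys m).length + jj) +
            (((i - (zW x ys m).length) / seg.length) * c) * v.length := by
          have := Nat.mod_add_div' (i - (zW x ys m).length) seg.length
          rw [mul_assoc, ← hc]
          omega
        calc w i = upw u v i := by rw [hw]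
          _ = upw u v ((zW x ys m).length + jj) := by
              conv_lhs => rw [hky]
              exact upw_period_mul u v _ _ (by omega)
          _ = w ((zW x ys m).length + jj) := by rw [hw]
          _ = seg.getD jj default := hwj
    · -- M(z m ++ seg) = M(z m)
      rw [← hsplit, hMz n, hMz m]
    · -- seg accepted by A^{M(z m)}
      rw [hMz m, DFA.mem_accepts, hloop.2.1]
      exact hq
  · -- UP(F) ⊆ UP(L(B̲))
    rintro w ⟨u, v, hv, hw, hacc⟩
    have hvlen : 0 < v.length := List.length_pos_iff.2 hv
    set s := F.M.eval u with hs
    haveI : Fintype (F.Pσ s) := F.finP s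
    set f : ℕ → F.Pσ s := fun k => (F.A s).eval (rep v k) with hf
    have hfadd : ∀ a b : ℕ, f (a + b) = (F.A s).evalFrom (f a) (rep v b) := by
      intro a b
      simp only [hf, rep_add]
      exact eval_append _ _ _
    obtain ⟨i, j, hij, hfeq⟩ : ∃ i j : ℕ, i < j ∧ f i = f j := by
      obtain ⟨i, j, hne, he⟩ := Finite.exists_ne_map_eq_of_infinite f
      rcases Nat.lt_or_ge i j with h | h
      · exact ⟨i, j, h, he⟩
      · exact ⟨j, i, by omega, he.symm⟩
    obtain ⟨e, rfl⟩ : ∃ e, j = i + (e + 1) := ⟨j - i - 1, by omega⟩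
    set d := e + 1 with hd
    have hstep : ∀ r, f (i + r + d) = f (i + r) := by
      intro r
      have h1 : i + r + d = (i + d) + r := by omega
      rw [h1, hfadd (i + d) r, hfadd i r, ← hfeq]
    have hper : ∀ r c, f (i + r + c * d) = f (i + r) := by
      intro r c
      induction c with
      | zero => simp
      | succ c ih =>
        have h1 : i + r + (c + 1) * d = i + (r + c * d) + d := by ring
        rw [h1, hstep (r + c * d), show i + (r + c * d) = i + r + c * d by ring, ih]
    -- choose m with f m = f (2m), m ≥ 1
    set m := i * d + d with hm
    have hm1 : 1 ≤ m := by omega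
    have hq2 : f (m + m) = f m := by
      have h1 : m + m = i + (i * e + d) + (i + 1) * d := by rw [hm, hd]; ring
      have h2 : m = i + (i * e + d) := by rw [hm, hd]; ring
      rw [h1, hper (i * e + d) (i + 1), ← h2]
    obtain ⟨hM, hA⟩ := hclosed u v hv hacc m hm1
    set q := f m with hqdef
    have hqacc : q ∈ (F.A s).accept := (DFA.mem_accepts _).1 hA
    have hMloop : F.M.evalFrom s (rep v m) = s := by
      have h1 : F.M.eval (u ++ rep v m) = F.M.evalFrom s (rep v m) := by
        rw [eval_append, ← hs]
      rw [← h1, hM, ← hs]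
    have hrep_ne : rep v m ≠ [] := by
      intro h
      have h2 := congrArg List.length h
      rw [length_rep] at h2
      simp only [List.length_nil, Nat.mul_eq_zero] at h2
      rcases h2 with h2 | h2 <;> omega
    have hloop : rep v m ∈ underLoop F s q := by
      refine ⟨hMloop, rfl, ?_⟩
      have := hq2
      rw [hfadd m m] at this
      exact this
    refine ⟨u, v, hv, hw, s, q, hqacc, u, fun _ => rep v m, hs.symm,
      fun _ => ⟨hrep_ne, hloop⟩, ?_⟩
    intro k
    have hflat : ((List.range k).map (fun _ => rep v m)).flatten = rep v (k * m) := by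
      rw [List.map_const', List.length_range, ← rep, rep_rep]
    rw [hflat, hw]
    exact prefW_upw_rep u v (k * m)
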